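/- arXiv:math/0212289 — 3 statements merged into one kernel-verified Lean document; each statement's English description precedes it below -/
import Mathlib

section
/- Let μ be a nonzero Radon measure on ℝ^d, f ∈ L¹_loc(μ), 0 < α ≤ 1, and suppose there exist a constant C₁ and numbers f_B indexed by balls such that (1/μ(2B))∫_B |f - f_B| dμ ≤ C₁ r^α for every ball B of radius r (centered in supp μ), and |f_B - f_U| ≤ C₁ r^α whenever B ⊂ U with radius(U) ≤ 2·radius(B) = 2r. Then there is a constant C depending only on d and α such that |f(x) - f(y)| ≤ C C₁ |x - y|^α for μ-almost every x and y in supp μ. -/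
open MeasureTheory Metric Filter
open scoped ENNReal Topology

/-- The support of a measure on `ℝ^d`: points all of whose balls have positive measure. -/
def measSupport {d : ℕ} (μ : Measure (EuclideanSpace ℝ (Fin d))) :
    Set (EuclideanSpace ℝ (Fin d)) :=
  {x | ∀ r : ℝ, 0 < r → 0 < μ (ball x r)}

variable {d : ℕ}

lemma aux_ae_support (μ : Measure (EuclideanSpace ℝ (Fin d))) :
    ∀ᵐ x ∂μ, x ∈ measSupport μ := by
  rw [ae_iff]
  apply measure_null_of_locally_null
  intro x hx
  simp only [measSupport, Set.mem_setOf_eq, not_forall] at hx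
  obtain ⟨r, hr, hr0⟩ := hx
  push_neg at hr0
  exact ⟨ball x r, mem_nhdsWithin_of_mem_nhds (ball_mem_nhds x hr), by simpa using hr0⟩

lemma aux_leb (μ : Measure (EuclideanSpace ℝ (Fin d))) [IsLocallyFiniteMeasure μ]
    (f : EuclideanSpace ℝ (Fin d) → ℝ) (hf : LocallyIntegrable f μ) :
    ∀ᵐ x ∂μ, Tendsto (fun r => ⨍ y in closedBall x r, |f y - f x| ∂μ) (𝓝[>] 0) (𝓝 0) := by
  filter_upwards [(Besicovitch.vitaliFamily μ).ae_tendsto_average_norm_sub hf] with x hx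
  have := hx.comp (Besicovitch.tendsto_filterAt μ x)
  simpa [Real.norm_eq_abs, Function.comp_def] using this

lemma aux_doubling (μ : Measure (EuclideanSpace ℝ (Fin d))) [IsLocallyFiniteMeasure μ] :
    ∀ᵐ x ∂μ, ∀ r1 : ℝ, 0 < r1 →
      ∃ r : ℝ, 0 < r ∧ r ≤ r1 ∧
        (μ (ball x (2 * r))).toReal ≤ 2 ^ (d + 1) * (μ (ball x r)).toReal := by
  filter_upwards [Besicovitch.ae_tendsto_rnDeriv volume μ, Measure.rnDeriv_lt_top volume μ]
    with x hx hlt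
  intro r1 hr1
  by_contra hcon
  push_neg at hcon
  set L := volume.rnDeriv μ x with hL
  have hLlt : L < ⊤ := hlt
  have hev : ∀ᶠ r in 𝓝[>] (0:ℝ),
      volume (closedBall x r) / μ (closedBall x r) < L + 1 :=
    hx (Iio_mem_nhds (ENNReal.lt_add_right hLlt.ne one_ne_zero))
  obtain ⟨r0, hr0mem, hr0⟩ := mem_nhdsGT_iff_exists_Ioc_subset.mp hev
  have hr0pos : (0:ℝ) < r0 := hr0mem
  set V1 : ℝ := (volume (ball (0 : EuclideanSpace ℝ (Fin d)) 1)).toReal with hV1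
  have hV1pos : 0 < V1 :=
    ENNReal.toReal_pos (measure_ball_pos volume 0 one_pos).ne' measure_ball_lt_top.ne
  have hL1top : L + 1 ≠ ⊤ := ENNReal.add_ne_top.mpr ⟨hLlt.ne, ENNReal.one_ne_top⟩
  have hL1pos : 0 < (L + 1).toReal := ENNReal.toReal_pos (by simp) hL1top
  set c : ℝ := V1 / (L + 1).toReal with hc
  have hcpos : 0 < c := div_pos hV1pos hL1pos
  have hlow : ∀ r : ℝ, 0 < r → r ≤ r0 → c * r ^ d ≤ (μ (closedBall x r)).toReal := by
    intro r hr hrr0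
    have hmem : volume (closedBall x r) / μ (closedBall x r) < L + 1 := hr0 ⟨hr, hrr0⟩
    have hvolpos : volume (closedBall x r) ≠ 0 := (measure_closedBall_pos volume x hr).ne'
    have hμne : μ (closedBall x r) ≠ 0 := by
      intro h0
      rw [h0, ENNReal.div_zero hvolpos] at hmem
      exact not_top_lt hmem
    have hμtop : μ (closedBall x r) ≠ ⊤ := measure_closedBall_lt_top.ne
    rw [ENNReal.div_lt_iff (Or.inl hμne) (Or.inl hμtop)] at hmem
    have hvol : volume (closedBall x r)
        = ENNReal.ofReal (r ^ d) * volume (ball (0 : EuclideanSpace ℝ (Fin d)) 1) := by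
      rw [Measure.addHaar_closedBall volume x hr.le, finrank_euclideanSpace_fin]
    have hmt := ENNReal.toReal_mono (ENNReal.mul_ne_top hL1top hμtop) hmem.le
    rw [hvol, ENNReal.toReal_mul, ENNReal.toReal_mul, ENNReal.toReal_ofReal (by positivity)]
      at hmt
    calc c * r ^ d = (r ^ d * V1) / (L + 1).toReal := by rw [hc]; ring
      _ ≤ ((L + 1).toReal * (μ (closedBall x r)).toReal) / (L + 1).toReal := by gcongr
      _ = (μ (closedBall x r)).toReal := by field_simp
  set ρ := min r0 r1 with hρ
  have hρpos : 0 < ρ := lt_min hr0pos hr1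
  set A : ℕ → ℝ := fun k => (μ (ball x (ρ / 2 ^ k))).toReal with hA
  have honele : ∀ k : ℕ, (1:ℝ) ≤ 2 ^ k := fun k => one_le_pow₀ one_le_two
  have hstep : ∀ k : ℕ, 2 ^ (d+1) * A (k+1) < A k := by
    intro k
    have h2r : (2:ℝ) * (ρ / 2 ^ (k+1)) = ρ / 2 ^ k := by
      field_simp
      ring
    have h := hcon (ρ / 2 ^ (k+1)) (by positivity)
      ((div_le_self hρpos.le (honele (k+1))).trans (min_le_right _ _))
    rw [h2r] at h
    exact h
  have hgeom : ∀ k : ℕ, (2:ℝ) ^ ((d+1) * k) * A k ≤ A 0 := by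
    intro k
    induction k with
    | zero => simp
    | succ k ih =>
      have heq : (2:ℝ) ^ ((d+1) * (k+1)) * A (k+1)
          = 2 ^ ((d+1)*k) * (2 ^ (d+1) * A (k+1)) := by
        rw [show (d+1) * (k+1) = (d+1)*k + (d+1) by ring, pow_add]
        ring
      rw [heq]
      exact le_trans (mul_le_mul_of_nonneg_left (hstep k).le (by positivity)) ih
  have hlowA : ∀ k : ℕ, c * ρ ^ d / 2 ^ ((k+1)*d) ≤ A k := by
    intro k
    have hsub : closedBall x (ρ / 2 ^ (k+1)) ⊆ ball x (ρ / 2 ^ k) := by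
      apply closedBall_subset_ball
      apply div_lt_div_of_pos_left hρpos (by positivity)
      exact pow_lt_pow_right₀ one_lt_two (Nat.lt_succ_self k)
    have hle : ρ / 2 ^ (k+1) ≤ r0 :=
      (div_le_self hρpos.le (honele (k+1))).trans (min_le_left _ _)
    have h1 := hlow (ρ / 2 ^ (k+1)) (by positivity) hle
    have h2 : (μ (closedBall x (ρ / 2 ^ (k+1)))).toReal ≤ A k :=
      ENNReal.toReal_mono measure_ball_lt_top.ne (measure_mono hsub)
    calc c * ρ ^ d / 2 ^ ((k+1)*d) = c * (ρ / 2 ^ (k+1)) ^ d := by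
          rw [div_pow, ← pow_mul]
          ring
      _ ≤ (μ (closedBall x (ρ / 2 ^ (k+1)))).toReal := h1
      _ ≤ A k := h2
  obtain ⟨k, hk⟩ := pow_unbounded_of_one_lt (A 0 * 2 ^ d / (c * ρ ^ d)) (one_lt_two (α := ℝ))
  have hfin : (2:ℝ) ^ ((d+1)*k) * (c * ρ ^ d / 2 ^ ((k+1)*d)) ≤ A 0 :=
    le_trans (mul_le_mul_of_nonneg_left (hlowA k) (by positivity)) (hgeom k)
  have hsimp : (2:ℝ) ^ ((d+1)*k) * (c * ρ ^ d / 2 ^ ((k+1)*d)) = c * ρ ^ d * 2 ^ k / 2 ^ d := by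
    rw [show (d+1)*k = d*k + k by ring, show (k+1)*d = d*k + d by ring, pow_add, pow_add]
    field_simp
  rw [hsimp, div_le_iff₀ (by positivity : (0:ℝ) < 2 ^ d)] at hfin
  rw [div_lt_iff₀ (by positivity : (0:ℝ) < c * ρ ^ d)] at hk
  nlinarith [hfin, hk]


/-- (I) ⇒ (II) in the characterization of `Lip(α,μ)`. -/
theorem stmt5 {d : ℕ} (μ : Measure (EuclideanSpace ℝ (Fin d))) [IsLocallyFiniteMeasure μ]
    (hμ : μ ≠ 0)
    (f : EuclideanSpace ℝ (Fin d) → ℝ) (hf : LocallyIntegrable f μ)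
    (α : ℝ) (hα : 0 < α) (hα1 : α ≤ 1) (C₁ : ℝ) (hC₁ : 0 ≤ C₁)
    (fB : EuclideanSpace ℝ (Fin d) → ℝ → ℝ)
    (h1 : ∀ x ∈ measSupport μ, ∀ r : ℝ, 0 < r →
      ∫ y in ball x r, |f y - fB x r| ∂μ ≤ C₁ * r ^ α * (μ (ball x (2 * r))).toReal)
    (h2 : ∀ x ∈ measSupport μ, ∀ r : ℝ, 0 < r → ∀ y ∈ measSupport μ, ∀ R : ℝ,
      ball x r ⊆ ball y R → R ≤ 2 * r → |fB x r - fB y R| ≤ C₁ * r ^ α) :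
    ∃ C : ℝ, 0 < C ∧
      ∀ᵐ x ∂μ, ∀ᵐ y ∂μ, |f x - f y| ≤ C * C₁ * dist x y ^ α := by
  classical
  set t : ℝ := (2:ℝ) ^ (-α) with ht
  have ht0 : 0 < t := Real.rpow_pos_of_pos two_pos _
  have ht1 : t < 1 := by
    rw [ht]
    exact Real.rpow_lt_one_of_one_lt_of_neg one_lt_two (neg_lt_zero.mpr hα)
  have h1t : 0 < 1 - t := by linarith
  set K₁ : ℝ := 1 + (1 - t)⁻¹ with hK₁
  have hK₁pos : 0 < K₁ := by positivity
  -- dyadic power identity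
  have hpow : ∀ (R : ℝ), 0 < R → ∀ k : ℕ, (R / 2 ^ k) ^ α = R ^ α * t ^ k := by
    intro R hR k
    induction k with
    | zero => simp
    | succ k ih =>
      have : R / 2 ^ (k+1) = (R / 2 ^ k) / 2 := by
        rw [pow_succ, div_div]
      rw [this, Real.div_rpow (by positivity) (by norm_num), ih, pow_succ, ht,
        Real.rpow_neg (by norm_num : (0:ℝ) ≤ 2)]
      rw [div_eq_mul_inv]
      ring
  -- dyadic telescoping
  have dyadic : ∀ x ∈ measSupport μ, ∀ R : ℝ, 0 < R → ∀ n : ℕ,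
      |fB x (R / 2 ^ n) - fB x R| ≤ ∑ k ∈ Finset.range n, C₁ * (R / 2 ^ (k+1)) ^ α := by
    intro x hxS R hR n
    induction n with
    | zero => simp
    | succ n ih =>
      have hsub : ball x (R / 2 ^ (n+1)) ⊆ ball x (R / 2 ^ n) := by
        apply ball_subset_ball
        gcongr
        · exact one_le_two
        · exact Nat.le_succ n
      have h2r : R / 2 ^ n ≤ 2 * (R / 2 ^ (n+1)) := by
        rw [pow_succ]
        rw [show (2:ℝ) * (R / (2 ^ n * 2)) = R / 2 ^ n by field_simp]
      have hstep := h2 x hxS (R / 2 ^ (n+1)) (by positivity) x hxS (R / 2 ^ n) hsub h2r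
      calc |fB x (R / 2 ^ (n+1)) - fB x R|
          ≤ |fB x (R / 2 ^ (n+1)) - fB x (R / 2 ^ n)| + |fB x (R / 2 ^ n) - fB x R| :=
            abs_sub_le _ _ _
        _ ≤ C₁ * (R / 2 ^ (n+1)) ^ α + ∑ k ∈ Finset.range n, C₁ * (R / 2 ^ (k+1)) ^ α :=
            add_le_add hstep ih
        _ = ∑ k ∈ Finset.range (n+1), C₁ * (R / 2 ^ (k+1)) ^ α := by
            rw [Finset.sum_range_succ]
            ring
  have dyadic' : ∀ x ∈ measSupport μ, ∀ R : ℝ, 0 < R → ∀ n : ℕ,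
      |fB x (R / 2 ^ n) - fB x R| ≤ C₁ * R ^ α * (1 - t)⁻¹ := by
    intro x hxS R hR n
    refine (dyadic x hxS R hR n).trans ?_
    have hsum : ∀ k ∈ Finset.range n, C₁ * (R / 2 ^ (k+1)) ^ α = C₁ * R ^ α * t ^ (k+1) := by
      intro k _
      rw [hpow R hR (k+1)]
      ring
    rw [Finset.sum_congr rfl hsum]
    have hgle : ∑ k ∈ Finset.range n, t ^ (k+1) ≤ (1 - t)⁻¹ := by
      have h1 : ∀ k ∈ Finset.range n, t ^ (k+1) ≤ t ^ k := fun k _ =>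
        pow_le_pow_of_le_one ht0.le ht1.le (Nat.le_succ k)
      refine le_trans (Finset.sum_le_sum h1) ?_
      rw [geom_sum_eq ht1.ne n]
      rw [show (t ^ n - 1) / (t - 1) = (1 - t ^ n) / (1 - t) by rw [← neg_div_neg_eq]; ring_nf]
      rw [div_le_iff₀ h1t, inv_mul_cancel₀ h1t.ne']
      have : (0:ℝ) ≤ t ^ n := by positivity
      linarith
    calc ∑ k ∈ Finset.range n, C₁ * R ^ α * t ^ (k+1)
        = C₁ * R ^ α * ∑ k ∈ Finset.range n, t ^ (k+1) := by rw [Finset.mul_sum]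
      _ ≤ C₁ * R ^ α * (1 - t)⁻¹ := by
          apply mul_le_mul_of_nonneg_left hgle (by positivity)
  -- general telescoping
  have tele : ∀ x ∈ measSupport μ, ∀ r R : ℝ, 0 < r → r ≤ R →
      |fB x r - fB x R| ≤ K₁ * (C₁ * R ^ α) := by
    intro x hxS r R hr hrR
    have hR : 0 < R := lt_of_lt_of_le hr hrR
    have hex : ∃ n : ℕ, R / 2 ^ n < r := by
      obtain ⟨n, hn⟩ := pow_unbounded_of_one_lt (R / r) (one_lt_two (α := ℝ))
      refine ⟨n, ?_⟩
      rw [div_lt_iff₀ (by positivity : (0:ℝ) < 2 ^ n)]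
      rw [div_lt_iff₀ hr] at hn
      linarith
    have hn₀ := Nat.find_spec hex
    have hn₀ne : Nat.find hex ≠ 0 := by
      intro h
      rw [h] at hn₀
      simp only [pow_zero, div_one] at hn₀
      linarith
    obtain ⟨n, hn⟩ : ∃ n, Nat.find hex = n + 1 :=
      ⟨Nat.find hex - 1, (Nat.succ_pred_eq_of_pos (Nat.pos_of_ne_zero hn₀ne)).symm⟩
    have hub : r ≤ R / 2 ^ n := by
      have := Nat.find_min hex (m := n) (by omega)
      linarith [not_lt.mp this]
    have hlb : R / 2 ^ (n+1) < r := by rw [hn] at hn₀; exact hn₀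
    have hmid : R / 2 ^ n ≤ 2 * r := by
      have : R / 2 ^ n = 2 * (R / 2 ^ (n+1)) := by
        rw [pow_succ]
        field_simp
      rw [this]
      linarith
    have hpos : (0:ℝ) < R / 2 ^ n := by positivity
    have hfirst := h2 x hxS r hr x hxS (R / 2 ^ n) (ball_subset_ball hub) hmid
    have hsecond := dyadic' x hxS R hR n
    have hrα : C₁ * r ^ α ≤ C₁ * R ^ α :=
      mul_le_mul_of_nonneg_left (Real.rpow_le_rpow hr.le hrR hα.le) hC₁
    calc |fB x r - fB x R|
        ≤ |fB x r - fB x (R / 2 ^ n)| + |fB x (R / 2 ^ n) - fB x R| := abs_sub_le _ _ _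
      _ ≤ C₁ * r ^ α + C₁ * R ^ α * (1 - t)⁻¹ := add_le_add hfirst hsecond
      _ ≤ C₁ * R ^ α + C₁ * R ^ α * (1 - t)⁻¹ := by linarith
      _ = K₁ * (C₁ * R ^ α) := by rw [hK₁]; ring
  -- pointwise estimate at good points
  have ptw : ∀ x, x ∈ measSupport μ →
      Tendsto (fun r => ⨍ y in closedBall x r, |f y - f x| ∂μ) (𝓝[>] 0) (𝓝 0) →
      (∀ r1 : ℝ, 0 < r1 → ∃ r, 0 < r ∧ r ≤ r1 ∧
        (μ (ball x (2 * r))).toReal ≤ 2 ^ (d + 1) * (μ (ball x r)).toReal) →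
      ∀ R : ℝ, 0 < R → |f x - fB x R| ≤ K₁ * (C₁ * R ^ α) := by
    intro x hxS hLeb hDoub R hR
    have key : ∀ ε : ℝ, 0 < ε → |f x - fB x R| ≤ K₁ * (C₁ * R ^ α) + ε := by
      intro ε hε
      set δ : ℝ := ε / 2 ^ (d + 2) with hδ
      have hδpos : 0 < δ := by positivity
      have hrpow : Tendsto (fun r : ℝ => C₁ * r ^ α) (𝓝[>] 0) (𝓝 0) := by
        have hcont : Tendsto (fun r : ℝ => r ^ α) (𝓝 0) (𝓝 ((0:ℝ) ^ α)) :=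
          (Real.continuousAt_rpow_const 0 α (Or.inr hα.le)).tendsto
        rw [Real.zero_rpow hα.ne'] at hcont
        have hmul : Tendsto (fun r : ℝ => C₁ * r ^ α) (𝓝[>] (0:ℝ)) (𝓝 (C₁ * 0)) :=
          tendsto_const_nhds.mul (hcont.mono_left nhdsWithin_le_nhds)
        simpa using hmul
      have hsum : Tendsto (fun r : ℝ => (⨍ y in closedBall x r, |f y - f x| ∂μ) + C₁ * r ^ α)
          (𝓝[>] 0) (𝓝 0) := by
        have := hLeb.add hrpow
        simpa using this
      have hev : ∀ᶠ r in 𝓝[>] (0:ℝ),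
          (⨍ y in closedBall x r, |f y - f x| ∂μ) + C₁ * r ^ α < δ :=
        hsum (Iio_mem_nhds hδpos)
      obtain ⟨r1, hr1mem, hr1⟩ := mem_nhdsGT_iff_exists_Ioc_subset.mp hev
      have hr1pos : (0:ℝ) < r1 := hr1mem
      obtain ⟨r, hrpos, hrle, hdoub⟩ := hDoub (min r1 R) (lt_min hr1pos hR)
      have hrR : r ≤ R := hrle.trans (min_le_right _ _)
      have hrr1 : r ≤ r1 := hrle.trans (min_le_left _ _)
      have hless : (⨍ y in closedBall x r, |f y - f x| ∂μ) + C₁ * r ^ α < δ :=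
        hr1 ⟨hrpos, hrr1⟩
      have havg0 : 0 ≤ ⨍ y in closedBall x r, |f y - f x| ∂μ := by
        rw [setAverage_eq, smul_eq_mul]
        exact mul_nonneg (by positivity)
          (setIntegral_nonneg measurableSet_closedBall fun y _ => abs_nonneg _)
      have hCrnn : 0 ≤ C₁ * r ^ α := by positivity
      have havgδ : (⨍ y in closedBall x r, |f y - f x| ∂μ) ≤ δ := by linarith
      have hμb : 0 < (μ (ball x r)).toReal :=
        ENNReal.toReal_pos (hxS r hrpos).ne' measure_ball_lt_top.ne
      have hμ2top : μ (ball x (2*r)) ≠ ⊤ := measure_ball_lt_top.ne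
      have hsub1 : closedBall x r ⊆ ball x (2*r) := closedBall_subset_ball (by linarith)
      have hint : IntegrableOn f (closedBall x (2*r)) μ :=
        hf.integrableOn_isCompact (isCompact_closedBall _ _)
      have hint1 : IntegrableOn (fun y => |f y - f x|) (closedBall x r) μ := by
        apply Integrable.abs
        apply Integrable.sub
        · exact hint.mono_set (closedBall_subset_closedBall (by linarith))
        · exact integrableOn_const measure_closedBall_lt_top.ne
      have hint2 : IntegrableOn (fun y => |f y - fB x r|) (ball x r) μ := by
        apply Integrable.abs
        apply Integrable.sub
        · exact hint.mono_set
            (ball_subset_closedBall.trans (closedBall_subset_closedBall (by linarith)))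
        · exact integrableOn_const measure_ball_lt_top.ne
      have hint1' : IntegrableOn (fun y => |f y - f x|) (ball x r) μ :=
        hint1.mono_set ball_subset_closedBall
      have hchain : (μ (ball x r)).toReal * |f x - fB x r|
          ≤ (δ + C₁ * r ^ α) * (μ (ball x (2*r))).toReal := by
        have e1 : (μ (ball x r)).toReal * |f x - fB x r|
            = ∫ _y in ball x r, |f x - fB x r| ∂μ := by
          rw [setIntegral_const, smul_eq_mul, measureReal_def]
        have e2 : (∫ _y in ball x r, |f x - fB x r| ∂μ)
            ≤ ∫ y in ball x r, (|f y - f x| + |f y - fB x r|) ∂μ := by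
          apply setIntegral_mono_on
          · exact integrableOn_const measure_ball_lt_top.ne
          · exact hint1'.add hint2
          · exact measurableSet_ball
          · intro y _
            calc |f x - fB x r| ≤ |f x - f y| + |f y - fB x r| := abs_sub_le _ _ _
              _ = |f y - f x| + |f y - fB x r| := by rw [abs_sub_comm]
        have e3 : (∫ y in ball x r, (|f y - f x| + |f y - fB x r|) ∂μ)
            = (∫ y in ball x r, |f y - f x| ∂μ) + ∫ y in ball x r, |f y - fB x r| ∂μ :=
          integral_add hint1' hint2
        have e4 : (∫ y in ball x r, |f y - f x| ∂μ)
            ≤ ∫ y in closedBall x r, |f y - f x| ∂μ :=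
          setIntegral_mono_set hint1 (Filter.Eventually.of_forall fun y => abs_nonneg _)
            (HasSubset.Subset.eventuallyLE ball_subset_closedBall)
        have e5 : (∫ y in closedBall x r, |f y - f x| ∂μ)
            ≤ δ * (μ (ball x (2*r))).toReal := by
          have hμcb : 0 < (μ (closedBall x r)).toReal :=
            ENNReal.toReal_pos
              ((hxS r hrpos).trans_le (measure_mono ball_subset_closedBall)).ne'
              measure_closedBall_lt_top.ne
          have hIeq : (∫ y in closedBall x r, |f y - f x| ∂μ)
              = (μ (closedBall x r)).toReal * ⨍ y in closedBall x r, |f y - f x| ∂μ := by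
            rw [setAverage_eq, measureReal_def, smul_eq_mul, ← mul_assoc, mul_inv_cancel₀ hμcb.ne', one_mul]
          rw [hIeq]
          have hμle : (μ (closedBall x r)).toReal ≤ (μ (ball x (2*r))).toReal :=
            ENNReal.toReal_mono hμ2top (measure_mono hsub1)
          exact (mul_le_mul hμle havgδ havg0 ENNReal.toReal_nonneg).trans_eq (mul_comm _ _)
        have e6 := h1 x hxS r hrpos
        calc (μ (ball x r)).toReal * |f x - fB x r| = _ := e1
          _ ≤ _ := e2
          _ = _ := e3
          _ ≤ δ * (μ (ball x (2*r))).toReal + C₁ * r ^ α * (μ (ball x (2*r))).toReal :=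
              add_le_add (e4.trans e5) e6
          _ = (δ + C₁ * r ^ α) * (μ (ball x (2*r))).toReal := by ring
      have hchain2 : (μ (ball x r)).toReal * |f x - fB x r|
          ≤ (2 * δ * 2 ^ (d+1)) * (μ (ball x r)).toReal := by
        refine hchain.trans ?_
        have h2δ : δ + C₁ * r ^ α ≤ 2 * δ := by linarith
        have hmul := mul_le_mul h2δ hdoub ENNReal.toReal_nonneg (by positivity)
        calc (δ + C₁ * r ^ α) * (μ (ball x (2*r))).toReal
            ≤ 2 * δ * (2 ^ (d+1) * (μ (ball x r)).toReal) := hmul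
          _ = (2 * δ * 2 ^ (d+1)) * (μ (ball x r)).toReal := by ring
      have hfinal : |f x - fB x r| ≤ ε := by
        have hb : |f x - fB x r| ≤ 2 * δ * 2 ^ (d+1) := by
          have h' := hchain2
          rw [mul_comm ((μ (ball x r)).toReal)] at h'
          exact le_of_mul_le_mul_right h' hμb
        refine hb.trans (le_of_eq ?_)
        rw [hδ, show (2:ℝ) ^ (d+2) = 2 ^ (d+1) * 2 by rw [pow_succ]]
        field_simp
      calc |f x - fB x R| ≤ |f x - fB x r| + |fB x r - fB x R| := abs_sub_le _ _ _
        _ ≤ ε + K₁ * (C₁ * R ^ α) := add_le_add hfinal (tele x hxS r R hrpos hrR)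
        _ = K₁ * (C₁ * R ^ α) + ε := by ring
    by_contra hgt
    push_neg at hgt
    have hkey := key ((|f x - fB x R| - K₁ * (C₁ * R ^ α)) / 2) (half_pos (sub_pos.mpr hgt))
    set A := |f x - fB x R| with hAdef
    set K := K₁ * (C₁ * R ^ α) with hKdef
    linarith
  have hGood : ∀ᵐ x ∂μ, x ∈ measSupport μ ∧
      ∀ R : ℝ, 0 < R → |f x - fB x R| ≤ K₁ * (C₁ * R ^ α) := by
    filter_upwards [aux_ae_support μ, aux_leb μ f hf, aux_doubling μ] with x hxS hxL hxD
    exact ⟨hxS, ptw x hxS hxL hxD⟩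
  refine ⟨3 * K₁ + 2, by positivity, ?_⟩
  filter_upwards [hGood] with x hx
  filter_upwards [hGood] with y hy
  rcases eq_or_ne x y with rfl | hxy
  · simp [Real.zero_rpow hα.ne']
  · have hD : 0 < dist x y := dist_pos.mpr hxy
    set D := dist x y with hDdef
    have hsub : ball x D ⊆ ball y (2 * D) := by
      intro z hz
      rw [mem_ball] at hz ⊢
      calc dist z y ≤ dist z x + dist x y := dist_triangle z x y
        _ < D + D := by rw [← hDdef]; linarith
        _ = 2 * D := by ring
    have b1 := hx.2 D hD
    have b2 := h2 x hx.1 D hD y hy.1 (2 * D) hsub (le_refl _)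
    have b3 : |fB y (2 * D) - f y| ≤ K₁ * (C₁ * (2 * D) ^ α) := by
      rw [abs_sub_comm]
      exact hy.2 (2 * D) (by linarith)
    have hDα : 0 ≤ D ^ α := Real.rpow_nonneg dist_nonneg α
    have h2α : (2 * D) ^ α ≤ 2 * D ^ α := by
      rw [Real.mul_rpow (by norm_num) dist_nonneg]
      have h2le : (2:ℝ) ^ α ≤ 2 := by
        calc (2:ℝ) ^ α ≤ (2:ℝ) ^ (1:ℝ) := Real.rpow_le_rpow_of_exponent_le one_le_two hα1
          _ = 2 := Real.rpow_one 2
      nlinarith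
    have hb3' : |fB y (2 * D) - f y| ≤ K₁ * (C₁ * (2 * D ^ α)) := by
      refine b3.trans ?_
      have := mul_le_mul_of_nonneg_left h2α hC₁
      nlinarith
    calc |f x - f y| ≤ |f x - fB y (2*D)| + |fB y (2*D) - f y| := abs_sub_le _ _ _
      _ ≤ (|f x - fB x D| + |fB x D - fB y (2*D)|) + |fB y (2*D) - f y| :=
          add_le_add_left (abs_sub_le _ _ _) _
      _ ≤ (K₁ * (C₁ * D ^ α) + C₁ * D ^ α) + K₁ * (C₁ * (2 * D ^ α)) :=
          add_le_add (add_le_add b1 b2) hb3'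
      _ ≤ (3 * K₁ + 2) * C₁ * D ^ α := by nlinarith [mul_nonneg hC₁ hDα, hK₁pos]
end

section
/- Let μ be an n-dimensional measure on ℝ^d (i.e., μ(B(x,r)) ≤ C₀ r^n for all x, r), and let 0 < α ≤ 1. For an assignment B ↦ f_B of numbers to balls, the condition |f_B - f_U| ≤ C radius(U)^α for all balls B ⊂ U is equivalent (with comparable constants) to |f_B - f_U| ≤ C' K_{B,U} radius(U)^α for all balls B ⊂ U, where K_{B,U} = 1 + ∑_{j=1}^{N_{B,U}} μ(2^j B)/(2^j radius(B))^n and N_{B,U} is the first integer k with 2^k radius(B) ≥ radius(U). -/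
open MeasureTheory Metric
open scoped ENNReal

/-- The first integer `k` with `2^k r ≥ R`. -/
noncomputable def NBU (r R : ℝ) : ℕ := sInf {k : ℕ | R ≤ 2 ^ k * r}

/-- Tolsa's constant `K_{B,U}` for concentric-dyadic chains from `B = B(x,r)` towards a
ball of radius `R`. -/
noncomputable def KBU {d : ℕ} (μ : Measure (EuclideanSpace ℝ (Fin d))) (n : ℝ)
    (x : EuclideanSpace ℝ (Fin d)) (r R : ℝ) : ℝ :=
  1 + ∑ j ∈ Finset.Icc 1 (NBU r R),
        (μ (ball x (2 ^ j * r))).toReal / ((2 : ℝ) ^ j * r) ^ n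

/-!
Since `K_{B,U} ≥ 1`, only the converse needs an argument. For balls of comparable radii the
growth condition bounds `K_{B,U}` by `1 + 2 C₀`, so along the dyadic chain
`B(x, r) ⊆ B(x, 2r) ⊆ ⋯ ⊆ B(x, 2^N r)` the increments of `f` grow geometrically with ratio
`2^α > 1` and sum to a multiple of the last one. If `R ≤ r` then `K_{B,U} = 1` already; otherwise
stop at the first radius with `R ≤ 2^N r < 2R`, and compare `B(x, 2^N r)` and `B(y, R)` through
`B(y, 4R)`, which contains both and has comparable radius.
-/

lemma NBU_le_of_le {r R : ℝ} {k : ℕ} (h : R ≤ 2 ^ k * r) : NBU r R ≤ k := Nat.sInf_le h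

lemma le_two_pow_NBU_mul {r : ℝ} (R : ℝ) (hr : 0 < r) : R ≤ 2 ^ NBU r R * r := by
  obtain ⟨k, hk⟩ := pow_unbounded_of_one_lt (R / r) (one_lt_two (α := ℝ))
  exact Nat.sInf_mem (s := {k : ℕ | R ≤ 2 ^ k * r}) ⟨k, (div_le_iff₀ hr).mp hk.le⟩

lemma two_pow_NBU_mul_lt {r R : ℝ} (hN : NBU r R ≠ 0) : 2 ^ NBU r R * r < 2 * R := by
  obtain ⟨m, hm⟩ := Nat.exists_eq_succ_of_ne_zero hN
  have hmR : ¬ R ≤ 2 ^ m * r := Nat.notMem_of_lt_sInf (hm ▸ Nat.lt_succ_self m : m < NBU r R)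
  rw [hm, pow_succ]
  linarith [not_le.mp hmR]

section KBU

variable {d : ℕ} (μ : Measure (EuclideanSpace ℝ (Fin d))) (n : ℝ) (x : EuclideanSpace ℝ (Fin d))
  {r R : ℝ}

lemma KBU_eq_one_of_le (h : R ≤ r) : KBU μ n x r R = 1 := by
  have hN : NBU r R = 0 := Nat.le_zero.mp (NBU_le_of_le (by simpa using h))
  simp [KBU, hN]

lemma one_le_KBU (R : ℝ) (hr : 0 < r) : 1 ≤ KBU μ n x r R :=
  le_add_of_nonneg_right <| Finset.sum_nonneg fun j _ =>
    div_nonneg ENNReal.toReal_nonneg (Real.rpow_nonneg (by positivity) n)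

variable {μ n} {C₀ : ℝ} (hC₀ : 0 ≤ C₀)
  (hgrowth : ∀ (x : EuclideanSpace ℝ (Fin d)) (r : ℝ), 0 < r →
    μ (ball x r) ≤ ENNReal.ofReal (C₀ * r ^ n))
include hC₀ hgrowth

lemma KBU_le_of_NBU_le (hr : 0 < r) {m : ℕ} (hm : NBU r R ≤ m) :
    KBU μ n x r R ≤ 1 + C₀ * m := by
  have hterm : ∀ j ∈ Finset.Icc 1 (NBU r R),
      (μ (ball x (2 ^ j * r))).toReal / ((2 : ℝ) ^ j * r) ^ n ≤ C₀ := by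
    intro j _
    have hρ : (0 : ℝ) < 2 ^ j * r := by positivity
    have hρn : (0 : ℝ) < (2 ^ j * r) ^ n := Real.rpow_pos_of_pos hρ n
    rw [div_le_iff₀ hρn]
    simpa [ENNReal.toReal_ofReal (mul_nonneg hC₀ hρn.le)] using
      ENNReal.toReal_mono ENNReal.ofReal_ne_top (hgrowth x _ hρ)
  have hsum := Finset.sum_le_sum hterm
  rw [Finset.sum_const, Nat.card_Icc, Nat.add_sub_cancel, nsmul_eq_mul] at hsum
  have hNm : (NBU r R : ℝ) ≤ m := by exact_mod_cast hm
  unfold KBU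
  nlinarith

lemma KBU_le_of_le_four_mul (hr : 0 < r) (h : R ≤ 4 * r) : KBU μ n x r R ≤ 1 + 2 * C₀ := by
  have := KBU_le_of_NBU_le x hC₀ hgrowth hr (m := 2) (NBU_le_of_le (by norm_num; linarith))
  push_cast at this
  linarith

end KBU

lemma abs_sub_le_of_abs_sub_succ_le_geometric {a : ℕ → ℝ} {c q : ℝ} (hq : 1 < q)
    (h : ∀ k, |a k - a (k + 1)| ≤ c * q ^ (k + 1)) (N : ℕ) :
    |a 0 - a N| ≤ c * q ^ N * (q / (q - 1)) := by
  have hq1 : 0 < q - 1 := sub_pos.2 hq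
  induction N with
  | zero =>
    have hc : 0 ≤ c :=
      nonneg_of_mul_nonneg_left (by simpa using (abs_nonneg _).trans (h 0)) (by linarith)
    have : 0 ≤ q / (q - 1) := div_nonneg (by linarith) hq1.le
    simpa using mul_nonneg hc this
  | succ N ih =>
    calc |a 0 - a (N + 1)| ≤ |a 0 - a N| + |a N - a (N + 1)| := abs_sub_le _ _ _
      _ ≤ c * q ^ N * (q / (q - 1)) + c * q ^ (N + 1) := add_le_add ih (h N)
      _ = c * q ^ (N + 1) * (q / (q - 1)) := by field_simp; ring

lemma rpow_two_pow_mul {r : ℝ} (hr : 0 ≤ r) (α : ℝ) (k : ℕ) :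
    ((2 : ℝ) ^ k * r) ^ α = (2 ^ α) ^ k * r ^ α := by
  rw [Real.mul_rpow (by positivity) hr, Real.rpow_pow_comm zero_le_two]

noncomputable def dyadicChainConst (C₀ α : ℝ) : ℝ :=
  (1 + 2 * C₀) * (2 ^ α) ^ 2 * (1 / (2 ^ α - 1) + 2)

lemma one_le_dyadicChainConst {C₀ α : ℝ} (hC₀ : 0 ≤ C₀) (hα : 0 < α) :
    1 ≤ dyadicChainConst C₀ α := by
  have hq : 1 < (2 : ℝ) ^ α := Real.one_lt_rpow one_lt_two hα
  have : 0 < 1 / ((2 : ℝ) ^ α - 1) := one_div_pos.2 (sub_pos.2 hq)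
  calc (1 : ℝ) = 1 * 1 ^ 2 * 1 := by norm_num
    _ ≤ dyadicChainConst C₀ α := by unfold dyadicChainConst; gcongr <;> linarith

section Chain

variable {d : ℕ} {μ : Measure (EuclideanSpace ℝ (Fin d))} {n C₀ α C : ℝ}
  {f : EuclideanSpace ℝ (Fin d) → ℝ → ℝ} (hC₀ : 0 ≤ C₀)
  (hgrowth : ∀ (x : EuclideanSpace ℝ (Fin d)) (r : ℝ), 0 < r →
    μ (ball x r) ≤ ENNReal.ofReal (C₀ * r ^ n))
  (hC : 0 ≤ C)
  (H : ∀ (x : EuclideanSpace ℝ (Fin d)) (r : ℝ) (y : EuclideanSpace ℝ (Fin d)) (R : ℝ),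
    0 < r → 0 < R → ball x r ⊆ ball y R → |f x r - f y R| ≤ C * KBU μ n x r R * R ^ α)
include hC₀ hgrowth hC H

lemma abs_sub_le_of_le_four_mul {x y : EuclideanSpace ℝ (Fin d)} {r R : ℝ} (hr : 0 < r)
    (hR : 0 < R) (hsub : ball x r ⊆ ball y R) (h : R ≤ 4 * r) :
    |f x r - f y R| ≤ C * (1 + 2 * C₀) * R ^ α := by
  have := Real.rpow_nonneg hR.le α
  exact (H x r y R hr hR hsub).trans (by gcongr; exact KBU_le_of_le_four_mul x hC₀ hgrowth hr h)

lemma abs_sub_two_pow_mul_le (hα : 0 < α) (x : EuclideanSpace ℝ (Fin d)) {r : ℝ} (hr : 0 < r)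
    (N : ℕ) :
    |f x r - f x (2 ^ N * r)| ≤
      C * (1 + 2 * C₀) * (2 ^ N * r) ^ α * (2 ^ α / (2 ^ α - 1)) := by
  have hstep : ∀ k : ℕ, |f x (2 ^ k * r) - f x (2 ^ (k + 1) * r)| ≤
      C * (1 + 2 * C₀) * r ^ α * (2 ^ α) ^ (k + 1) := by
    intro k
    have hρ : (0 : ℝ) < 2 ^ k * r := by positivity
    have h2ρ : (2 : ℝ) ^ (k + 1) * r = 2 * (2 ^ k * r) := by ring
    rw [mul_assoc _ (r ^ α), mul_comm (r ^ α), ← rpow_two_pow_mul hr.le]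
    exact abs_sub_le_of_le_four_mul hC₀ hgrowth hC H hρ (by positivity)
      (ball_subset_ball (by linarith)) (by linarith)
  calc |f x r - f x (2 ^ N * r)| = |f x (2 ^ 0 * r) - f x (2 ^ N * r)| := by
        rw [pow_zero, one_mul]
    _ ≤ C * (1 + 2 * C₀) * r ^ α * (2 ^ α) ^ N * (2 ^ α / (2 ^ α - 1)) :=
        abs_sub_le_of_abs_sub_succ_le_geometric (a := fun k => f x (2 ^ k * r))
          (Real.one_lt_rpow one_lt_two hα) hstep N
    _ = C * (1 + 2 * C₀) * (2 ^ N * r) ^ α * (2 ^ α / (2 ^ α - 1)) := by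
        rw [rpow_two_pow_mul hr.le]; ring

lemma abs_sub_le_dyadicChainConst_mul (hα : 0 < α) {x y : EuclideanSpace ℝ (Fin d)} {r R : ℝ}
    (hr : 0 < r) (hR : 0 < R) (hsub : ball x r ⊆ ball y R) :
    |f x r - f y R| ≤ dyadicChainConst C₀ α * C * R ^ α := by
  have hRα : 0 ≤ R ^ α := Real.rpow_nonneg hR.le α
  rcases eq_or_ne (NBU r R) 0 with hN | hN
  · have hRr : R ≤ r := by simpa [hN] using le_two_pow_NBU_mul R hr
    calc |f x r - f y R| ≤ C * KBU μ n x r R * R ^ α := H x r y R hr hR hsub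
      _ = 1 * (C * R ^ α) := by rw [KBU_eq_one_of_le μ n x hRr]; ring
      _ ≤ dyadicChainConst C₀ α * (C * R ^ α) := by
          gcongr; exact one_le_dyadicChainConst hC₀ hα
      _ = dyadicChainConst C₀ α * C * R ^ α := by ring
  set q : ℝ := 2 ^ α
  have hq : 1 < q := Real.one_lt_rpow one_lt_two hα
  set ρ : ℝ := 2 ^ NBU r R * r
  have hRρ : R ≤ ρ := le_two_pow_NBU_mul R hr
  have hρ : 0 < ρ := hR.trans_le hRρ
  have hρα : ρ ^ α ≤ q * R ^ α := by
    rw [← Real.mul_rpow zero_le_two hR.le]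
    exact Real.rpow_le_rpow hρ.le (two_pow_NBU_mul_lt hN).le hα.le
  have h4Rα : (4 * R) ^ α = q ^ 2 * R ^ α := by
    rw [Real.mul_rpow zero_le_four hR.le, show (4 : ℝ) = 2 ^ 2 by norm_num,
      ← Real.rpow_pow_comm zero_le_two]
  have hxy : dist x y < R := hsub (mem_ball_self hr)
  have hchain := abs_sub_two_pow_mul_le hC₀ hgrowth hC H hα x hr (NBU r R)
  have hx4R := abs_sub_le_of_le_four_mul (y := y) (R := 4 * R) hC₀ hgrowth hC H hρ
    (by positivity) (ball_subset_ball' (by linarith [two_pow_NBU_mul_lt hN])) (by linarith)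
  have hy4R := abs_sub_le_of_le_four_mul (x := y) (y := y) (R := 4 * R) hC₀ hgrowth hC H hR
    (by positivity) (ball_subset_ball (by linarith)) le_rfl
  rw [h4Rα] at hx4R hy4R
  have hq1 : 0 < q - 1 := sub_pos.2 hq
  calc |f x r - f y R| ≤ |f x r - f x ρ| + |f x ρ - f y (4 * R)| + |f y R - f y (4 * R)| := by
        linarith [abs_sub_le (f x r) (f x ρ) (f y R), abs_sub_le (f x ρ) (f y (4 * R)) (f y R),
          abs_sub_comm (f y R) (f y (4 * R))]
    _ ≤ C * (1 + 2 * C₀) * (q * R ^ α) * (q / (q - 1)) + C * (1 + 2 * C₀) * (q ^ 2 * R ^ α)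
        + C * (1 + 2 * C₀) * (q ^ 2 * R ^ α) := by
        gcongr
        exact hchain.trans (by gcongr)
    _ = dyadicChainConst C₀ α * C * R ^ α := by
        show _ = (1 + 2 * C₀) * q ^ 2 * (1 / (q - 1) + 2) * C * R ^ α
        field_simp
        ring

end Chain

theorem stmt8_general {d : ℕ} (μ : Measure (EuclideanSpace ℝ (Fin d)))
    (n C₀ : ℝ) (hC₀ : 0 < C₀)
    (hgrowth : ∀ (x : EuclideanSpace ℝ (Fin d)) (r : ℝ), 0 < r →
      μ (ball x r) ≤ ENNReal.ofReal (C₀ * r ^ n))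
    (α : ℝ) (hα : 0 < α) :
    ∃ A : ℝ, 0 < A ∧
      ∀ (fB : EuclideanSpace ℝ (Fin d) → ℝ → ℝ) (C : ℝ), 0 ≤ C →
        ((∀ (x : EuclideanSpace ℝ (Fin d)) (r : ℝ) (y : EuclideanSpace ℝ (Fin d)) (R : ℝ),
            0 < r → 0 < R → ball x r ⊆ ball y R →
              |fB x r - fB y R| ≤ C * R ^ α) →
          (∀ (x : EuclideanSpace ℝ (Fin d)) (r : ℝ) (y : EuclideanSpace ℝ (Fin d)) (R : ℝ),
            0 < r → 0 < R → ball x r ⊆ ball y R →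
              |fB x r - fB y R| ≤ C * KBU μ n x r R * R ^ α)) ∧
        ((∀ (x : EuclideanSpace ℝ (Fin d)) (r : ℝ) (y : EuclideanSpace ℝ (Fin d)) (R : ℝ),
            0 < r → 0 < R → ball x r ⊆ ball y R →
              |fB x r - fB y R| ≤ C * KBU μ n x r R * R ^ α) →
          (∀ (x : EuclideanSpace ℝ (Fin d)) (r : ℝ) (y : EuclideanSpace ℝ (Fin d)) (R : ℝ),
            0 < r → 0 < R → ball x r ⊆ ball y R →
              |fB x r - fB y R| ≤ A * C * R ^ α)) := by
  refine ⟨dyadicChainConst C₀ α, one_pos.trans_le (one_le_dyadicChainConst hC₀.le hα),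
    fun fB C hC => ⟨fun H x r y R hr hR hsub => ?_, fun H x r y R hr hR hsub =>
      abs_sub_le_dyadicChainConst_mul hC₀.le hgrowth hC H hα hr hR hsub⟩⟩
  have := Real.rpow_nonneg hR.le α
  exact (H x r y R hr hR hsub).trans
    (by gcongr; exact le_mul_of_one_le_right hC (one_le_KBU μ n x R hr))

/-- For an `n`-dimensional measure, the conditions `|f_B - f_U| ≤ C (radius U)^α` and
`|f_B - f_U| ≤ C K_{B,U} (radius U)^α` (over all pairs of balls `B ⊆ U`) are equivalent,
with comparable constants. -/
theorem stmt8 {d : ℕ} (μ : Measure (EuclideanSpace ℝ (Fin d))) [IsLocallyFiniteMeasure μ]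
    (n C₀ : ℝ) (hn : 0 < n) (hnd : n ≤ d) (hC₀ : 0 < C₀)
    (hgrowth : ∀ (x : EuclideanSpace ℝ (Fin d)) (r : ℝ), 0 < r →
      μ (ball x r) ≤ ENNReal.ofReal (C₀ * r ^ n))
    (α : ℝ) (hα : 0 < α) (hα1 : α ≤ 1) :
    ∃ A : ℝ, 0 < A ∧
      ∀ (fB : EuclideanSpace ℝ (Fin d) → ℝ → ℝ) (C : ℝ), 0 ≤ C →
        ((∀ (x : EuclideanSpace ℝ (Fin d)) (r : ℝ) (y : EuclideanSpace ℝ (Fin d)) (R : ℝ),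
            0 < r → 0 < R → ball x r ⊆ ball y R →
              |fB x r - fB y R| ≤ C * R ^ α) →
          (∀ (x : EuclideanSpace ℝ (Fin d)) (r : ℝ) (y : EuclideanSpace ℝ (Fin d)) (R : ℝ),
            0 < r → 0 < R → ball x r ⊆ ball y R →
              |fB x r - fB y R| ≤ C * KBU μ n x r R * R ^ α)) ∧
        ((∀ (x : EuclideanSpace ℝ (Fin d)) (r : ℝ) (y : EuclideanSpace ℝ (Fin d)) (R : ℝ),
            0 < r → 0 < R → ball x r ⊆ ball y R →
              |fB x r - fB y R| ≤ C * KBU μ n x r R * R ^ α) →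
          (∀ (x : EuclideanSpace ℝ (Fin d)) (r : ℝ) (y : EuclideanSpace ℝ (Fin d)) (R : ℝ),
            0 < r → 0 < R → ball x r ⊆ ball y R →
              |fB x r - fB y R| ≤ A * C * R ^ α)) :=
  stmt8_general μ n C₀ hC₀ hgrowth α hα
end

section
/- Let μ be a Radon measure on ℝ^d and f ∈ L¹_loc(μ). Suppose for every ball B of radius r (centered in supp μ) and every ball U ⊇ B with radius(U) ≤ 2r there exist constants a_B, a_U with (1/μ(2B))∫_B |g - a_B| dμ ≤ C r^α and |a_B - a_U| ≤ C r^α, where g differs from a fixed function by a constant μ-a.e. on each ball. Then (by the characterization theorem) g ∈ Lip(α, μ) with ‖g‖_{Lip(α,μ)} ≤ C' C, where C' depends only on d and α. -/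
open MeasureTheory Metric Filter Set Finset
open scoped ENNReal Topology

theorem ae_mem_measSupport {d : ℕ} (μ : Measure (EuclideanSpace ℝ (Fin d))) :
    ∀ᵐ x ∂μ, x ∈ measSupport μ := by
  have h : ∀ x : ↥((measSupport μ)ᶜ), ∃ r : ℝ, 0 < r ∧ μ (ball (x : EuclideanSpace ℝ (Fin d)) r) = 0 := by
    rintro ⟨x, hx⟩
    simp only [measSupport, Set.mem_compl_iff, Set.mem_setOf_eq, not_forall] at hx
    obtain ⟨r, hr, hr2⟩ := hx
    exact ⟨r, hr, by simpa [pos_iff_ne_zero] using hr2⟩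
  choose r hr hr0 using h
  obtain ⟨T, Tcount, hT⟩ := TopologicalSpace.isOpen_iUnion_countable
    (fun x : ↥((measSupport μ)ᶜ) => ball (x : EuclideanSpace ℝ (Fin d)) (r x))
    (fun x => isOpen_ball)
  rw [ae_iff]
  have hsub : {x | ¬ x ∈ measSupport μ} ⊆ ⋃ i ∈ T, ball (i : EuclideanSpace ℝ (Fin d)) (r i) := by
    rw [hT]
    intro x hx
    exact Set.mem_iUnion.2 ⟨⟨x, hx⟩, mem_ball_self (hr ⟨x, hx⟩)⟩
  refine measure_mono_null hsub ?_
  exact (measure_biUnion_null_iff Tcount).2 fun i _ => hr0 i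


open MeasureTheory Metric Filter Finset
open scoped ENNReal Topology


theorem exists_dyadic {s t : ℝ} (hs : 0 < s) (hst : s ≤ t) :
    ∃ n : ℕ, t * (1/2)^(n+1) < s ∧ s ≤ t * (1/2)^n := by
  have ht : 0 < t := hs.trans_le hst
  have hex : ∃ n : ℕ, t * (1/2)^(n+1) < s := by
    obtain ⟨n, hn⟩ := exists_pow_lt_of_lt_one (div_pos hs ht) (by norm_num : (1/2:ℝ) < 1)
    refine ⟨n, ?_⟩
    calc t * (1/2)^(n+1) ≤ t * (1/2)^n :=
          mul_le_mul_of_nonneg_left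
            (pow_le_pow_of_le_one (by norm_num) (by norm_num) (Nat.le_succ n)) ht.le
      _ < t * (s/t) := mul_lt_mul_of_pos_left hn ht
      _ = s := by field_simp
  classical
  refine ⟨Nat.find hex, Nat.find_spec hex, ?_⟩
  rcases Nat.eq_zero_or_pos (Nat.find hex) with h0 | hpos
  · rw [h0]; simpa using hst
  · have := Nat.find_min hex (Nat.sub_lt hpos one_pos)
    push_neg at this
    have heq : Nat.find hex - 1 + 1 = Nat.find hex := Nat.succ_pred_eq_of_pos hpos
    rwa [heq] at this

section B
variable {d : ℕ} {μ : Measure (EuclideanSpace ℝ (Fin d))}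
  {α C : ℝ} {aB : EuclideanSpace ℝ (Fin d) → ℝ → ℝ}

theorem pow_alpha (hα : 0 < α) {t : ℝ} (ht : 0 ≤ t) (n : ℕ) :
    (t * (1/2)^n) ^ α = t ^ α * ((1/2:ℝ) ^ α) ^ n := by
  rw [Real.mul_rpow ht (by positivity)]
  congr 1
  rw [← Real.rpow_natCast (1/2:ℝ) n, ← Real.rpow_mul (by norm_num), mul_comm,
    Real.rpow_mul (by norm_num : (0:ℝ) ≤ 1/2), Real.rpow_natCast]

variable (hα : 0 < α) (hC : 0 ≤ C)
  (h2 : ∀ x ∈ measSupport μ, ∀ r : ℝ, 0 < r → ∀ y ∈ measSupport μ, ∀ R : ℝ,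
      ball x r ⊆ ball y R → R ≤ 2 * r → |aB x r - aB y R| ≤ C * r ^ α)

include h2

theorem stepB {x : EuclideanSpace ℝ (Fin d)} (hx : x ∈ measSupport μ) {s t : ℝ}
    (hs : 0 < s) (hst : s ≤ t) (ht2 : t ≤ 2 * s) :
    |aB x s - aB x t| ≤ C * s ^ α :=
  h2 x hx s hs x hx t (ball_subset_ball hst) ht2

include hα

theorem telescope {x : EuclideanSpace ℝ (Fin d)} (hx : x ∈ measSupport μ) {t : ℝ}
    (ht : 0 < t) (n : ℕ) :
    |aB x (t * (1/2)^n) - aB x t| ≤ C * t ^ α *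
      (∑ k ∈ Finset.range n, ((1/2:ℝ) ^ α) ^ (k+1)) := by
  induction n with
  | zero => simp
  | succ n ih =>
    have hpos : (0:ℝ) < t * (1/2)^(n+1) := by positivity
    have hstep : |aB x (t * (1/2)^(n+1)) - aB x (t * (1/2)^n)| ≤
        C * (t * (1/2)^(n+1)) ^ α := by
      refine stepB h2 hx hpos ?_ (le_of_eq (by ring))
      exact mul_le_mul_of_nonneg_left
        (pow_le_pow_of_le_one (by norm_num) (by norm_num) (Nat.le_succ n)) ht.le
    calc |aB x (t * (1/2)^(n+1)) - aB x t|
        ≤ |aB x (t * (1/2)^(n+1)) - aB x (t * (1/2)^n)| + |aB x (t * (1/2)^n) - aB x t| :=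
          abs_sub_le _ _ _
      _ ≤ C * (t * (1/2)^(n+1)) ^ α + C * t ^ α * (∑ k ∈ Finset.range n, ((1/2:ℝ)^α)^(k+1)) :=
          add_le_add hstep ih
      _ = C * t ^ α * (∑ k ∈ Finset.range (n+1), ((1/2:ℝ)^α)^(k+1)) := by
          rw [pow_alpha hα ht.le, Finset.sum_range_succ]
          ring

include hC

theorem compareB {x : EuclideanSpace ℝ (Fin d)} (hx : x ∈ measSupport μ) {s t : ℝ}
    (hs : 0 < s) (hst : s ≤ t) :
    |aB x s - aB x t| ≤ C * (1 - (1/2:ℝ)^α)⁻¹ * t ^ α := by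
  set q : ℝ := (1/2:ℝ) ^ α with hq
  have hq0 : 0 < q := Real.rpow_pos_of_pos (by norm_num) α
  have hq1 : q < 1 := Real.rpow_lt_one (by norm_num) (by norm_num) hα
  have ht : 0 < t := hs.trans_le hst
  obtain ⟨n, hn1, hn2⟩ := exists_dyadic hs hst
  have h2s : t * (1/2)^n ≤ 2 * s := by
    calc t * (1/2)^n = 2 * (t * (1/2)^(n+1)) := by ring
      _ ≤ 2 * s := by linarith
  have hstep : |aB x s - aB x (t * (1/2)^n)| ≤ C * s ^ α :=
    stepB h2 hx hs hn2 h2s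
  have hsum : (∑ k ∈ Finset.range n, q ^ (k+1)) ≤ q * (1 - q)⁻¹ := by
    have he : (∑ k ∈ Finset.range n, q ^ (k+1)) = q * ∑ k ∈ Finset.range n, q ^ k := by
      rw [Finset.mul_sum]; exact Finset.sum_congr rfl fun k _ => by ring
    rw [he]
    refine mul_le_mul_of_nonneg_left ?_ hq0.le
    calc (∑ k ∈ Finset.range n, q ^ k) ≤ ∑' k : ℕ, q ^ k :=
          Summable.sum_le_tsum _ (fun k _ => by positivity) (summable_geometric_of_lt_one hq0.le hq1)
      _ = (1 - q)⁻¹ := tsum_geometric_of_lt_one hq0.le hq1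
  have htel := telescope hα h2 hx ht n
  have hsα : s ^ α ≤ t ^ α := Real.rpow_le_rpow hs.le hst hα.le
  have htα : 0 ≤ t ^ α := Real.rpow_nonneg ht.le α
  calc |aB x s - aB x t| ≤ |aB x s - aB x (t * (1/2)^n)| + |aB x (t * (1/2)^n) - aB x t| :=
        abs_sub_le _ _ _
    _ ≤ C * s ^ α + C * t ^ α * (q * (1-q)⁻¹) := by
        refine add_le_add hstep (htel.trans ?_)
        exact mul_le_mul_of_nonneg_left hsum (by positivity)
    _ ≤ C * t ^ α + C * t ^ α * (q * (1-q)⁻¹) := by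
        have := mul_le_mul_of_nonneg_left hsα hC
        linarith
    _ = C * (1 + q * (1-q)⁻¹) * t ^ α := by ring
    _ = C * (1 - q)⁻¹ * t ^ α := by
        have h1q : (1:ℝ) - q ≠ 0 := by linarith
        field_simp
        ring

end B
open MeasureTheory Metric Filter Finset
open scoped ENNReal Topology


section C
variable {d : ℕ} {μ : Measure (EuclideanSpace ℝ (Fin d))}
  {α C : ℝ} {aB : EuclideanSpace ℝ (Fin d) → ℝ → ℝ}


variable (hα : 0 < α) (hC : 0 ≤ C)
  (h2 : ∀ x ∈ measSupport μ, ∀ r : ℝ, 0 < r → ∀ y ∈ measSupport μ, ∀ R : ℝ,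
      ball x r ⊆ ball y R → R ≤ 2 * r → |aB x r - aB y R| ≤ C * r ^ α)

include hα hC h2

/-- convergence of the dyadic sequence to the limit function -/
theorem tendsto_A {x : EuclideanSpace ℝ (Fin d)} (hx : x ∈ measSupport μ) :
    Tendsto (fun n : ℕ => aB x ((1/2)^n)) atTop
      (𝓝 (limUnder atTop (fun n : ℕ => aB x ((1/2)^n)))) := by
  set q : ℝ := (1/2:ℝ) ^ α with hq
  have hq0 : 0 < q := Real.rpow_pos_of_pos (by norm_num) α
  have hq1 : q < 1 := Real.rpow_lt_one (by norm_num) (by norm_num) hα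
  have key : ∀ n m : ℕ, n ≤ m →
      dist (aB x ((1/2:ℝ)^n)) (aB x ((1/2:ℝ)^m)) ≤ C * (1 - q)⁻¹ * q ^ n := by
    intro n m hnm
    rw [Real.dist_eq, abs_sub_comm]
    have h1 : ((1/2:ℝ)^m) ≤ (1/2)^n :=
      pow_le_pow_of_le_one (by norm_num) (by norm_num) hnm
    have := compareB hα hC h2 hx (by positivity : (0:ℝ) < (1/2:ℝ)^m) h1
    calc |aB x ((1/2:ℝ)^m) - aB x ((1/2)^n)| ≤ C * (1 - q)⁻¹ * ((1/2:ℝ)^n) ^ α := this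
      _ = C * (1 - q)⁻¹ * q ^ n := by
          rw [show ((1/2:ℝ)^n) ^ α = (1 * (1/2:ℝ)^n) ^ α by norm_num,
            pow_alpha hα (by norm_num) n, Real.one_rpow, one_mul]
  have hcau : CauchySeq (fun n : ℕ => aB x ((1/2:ℝ)^n)) := by
    apply cauchySeq_of_le_tendsto_0 (fun n => C * (1 - q)⁻¹ * q ^ n)
    · intro n m N hn hm
      rcases le_total n m with h | h
      · exact (key n m h).trans (mul_le_mul_of_nonneg_left
          (pow_le_pow_of_le_one hq0.le hq1.le hn) (mul_nonneg hC (inv_nonneg.2 (by linarith))))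
      · rw [dist_comm]
        exact (key m n h).trans (mul_le_mul_of_nonneg_left
          (pow_le_pow_of_le_one hq0.le hq1.le hm) (mul_nonneg hC (inv_nonneg.2 (by linarith))))
    · simpa using (tendsto_pow_atTop_nhds_zero_of_lt_one hq0.le hq1).const_mul
        (C * (1 - q)⁻¹)
  exact hcau.tendsto_limUnder

/-- distance from `A x` to `aB x r` -/
theorem A_sub_aB {x : EuclideanSpace ℝ (Fin d)} (hx : x ∈ measSupport μ) {r : ℝ} (hr : 0 < r) :
    |limUnder atTop (fun n : ℕ => aB x ((1/2)^n)) - aB x r| ≤ C * (1 - (1/2:ℝ)^α)⁻¹ * r ^ α := by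
  have htd := tendsto_A hα hC h2 hx
  obtain ⟨N, hN⟩ := exists_pow_lt_of_lt_one hr (by norm_num : (1/2:ℝ) < 1)
  have hev : ∀ᶠ n : ℕ in atTop, |aB x ((1/2:ℝ)^n) - aB x r| ≤ C * (1 - (1/2:ℝ)^α)⁻¹ * r ^ α := by
    filter_upwards [eventually_ge_atTop N] with n hn
    have h1 : ((1/2:ℝ)^n) ≤ r :=
      le_of_lt (lt_of_le_of_lt (pow_le_pow_of_le_one (by norm_num) (by norm_num) hn) hN)
    exact compareB hα hC h2 hx (by positivity) h1
  have : Tendsto (fun n : ℕ => |aB x ((1/2:ℝ)^n) - aB x r|) atTop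
      (𝓝 |limUnder atTop (fun n : ℕ => aB x ((1/2)^n)) - aB x r|) :=
    ((htd.sub tendsto_const_nhds).abs)
  exact le_of_tendsto this hev

/-- Hölder continuity of A on the support -/
theorem A_holder {x y : EuclideanSpace ℝ (Fin d)} (hx : x ∈ measSupport μ)
    (hy : y ∈ measSupport μ) (hα1 : α ≤ 1) :
    |limUnder atTop (fun n : ℕ => aB x ((1/2)^n)) -
      limUnder atTop (fun n : ℕ => aB y ((1/2)^n))| ≤
      C * (3 * (1 - (1/2:ℝ)^α)⁻¹ + 1) * dist x y ^ α := by
  set c2 : ℝ := (1 - (1/2:ℝ)^α)⁻¹ with hc2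
  have hq0 : 0 < (1/2:ℝ)^α := Real.rpow_pos_of_pos (by norm_num) α
  have hq1 : (1/2:ℝ)^α < 1 := Real.rpow_lt_one (by norm_num) (by norm_num) hα
  have hc2pos : 0 < c2 := inv_pos.2 (by linarith)
  rcases eq_or_ne x y with rfl | hxy
  · simp only [sub_self, abs_zero, dist_self]
    rw [Real.zero_rpow hα.ne']
    simp
  · set t : ℝ := dist x y with htdef
    have ht : 0 < t := dist_pos.2 hxy
    have htα : 0 ≤ t ^ α := Real.rpow_nonneg ht.le α
    have hsub : ball x t ⊆ ball y (2 * t) := by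
      intro z hz
      rw [mem_ball] at hz ⊢
      calc dist z y ≤ dist z x + dist x y := dist_triangle _ _ _
        _ < t + t := by rw [dist_comm x y] at htdef; linarith
        _ = 2 * t := by ring
    have hmid : |aB x t - aB y (2*t)| ≤ C * t ^ α :=
      h2 x hx t ht y hy (2*t) hsub le_rfl
    have h1 : |limUnder atTop (fun n : ℕ => aB x ((1/2)^n)) - aB x t| ≤ C * c2 * t ^ α :=
      A_sub_aB hα hC h2 hx ht
    have h3 : |limUnder atTop (fun n : ℕ => aB y ((1/2)^n)) - aB y (2*t)| ≤
        C * c2 * (2*t) ^ α := A_sub_aB hα hC h2 hy (by linarith)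
    have h2tα : (2*t) ^ α ≤ 2 * t ^ α := by
      rw [Real.mul_rpow (by norm_num) ht.le]
      have : (2:ℝ) ^ α ≤ 2 ^ (1:ℝ) :=
        Real.rpow_le_rpow_of_exponent_le (by norm_num) hα1
      rw [Real.rpow_one] at this
      exact mul_le_mul_of_nonneg_right this htα
    have h3' : |limUnder atTop (fun n : ℕ => aB y ((1/2)^n)) - aB y (2*t)| ≤
        C * c2 * (2 * t ^ α) :=
      h3.trans (mul_le_mul_of_nonneg_left h2tα (by positivity))
    have e1 : |limUnder atTop (fun n : ℕ => aB x ((1/2)^n)) -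
          limUnder atTop (fun n : ℕ => aB y ((1/2)^n))| ≤
        |limUnder atTop (fun n : ℕ => aB x ((1/2)^n)) - aB x t| +
        |aB x t - limUnder atTop (fun n : ℕ => aB y ((1/2)^n))| := abs_sub_le _ _ _
    have e2 : |aB x t - limUnder atTop (fun n : ℕ => aB y ((1/2)^n))| ≤
        |aB x t - aB y (2*t)| +
        |aB y (2*t) - limUnder atTop (fun n : ℕ => aB y ((1/2)^n))| := abs_sub_le _ _ _
    rw [abs_sub_comm (aB y (2*t))] at e2
    have : C * c2 * t ^ α + C * t ^ α + C * c2 * (2 * t ^ α) = C * (3 * c2 + 1) * t ^ α := by ring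
    linarith
end C
open MeasureTheory Metric Filter Set
open scoped ENNReal Topology

theorem iterate_doubling {d : ℕ} (μ : Measure (EuclideanSpace ℝ (Fin d)))
    {x : EuclideanSpace ℝ (Fin d)} {ε : ℝ} (hε : 0 < ε)
    (h : ∀ r : ℝ, 0 < r → r < ε →
      ENNReal.ofReal ((2:ℝ)^(d+1)) * μ (ball x r) ≤ μ (ball x (2*r))) :
    ∀ ρ : ℝ, 0 < ρ → ρ ≤ ε/2 →
      μ (ball x ρ) ≤ ENNReal.ofReal ((2*ρ/ε)^(d+1)) * μ (ball x ε) := by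
  set c : ℝ≥0∞ := ENNReal.ofReal ((2:ℝ)^(d+1)) with hc
  have hc0 : c ≠ 0 := by
    rw [hc]; simp only [ne_eq, ENNReal.ofReal_eq_zero, not_le]; positivity
  have hctop : c ≠ ⊤ := ENNReal.ofReal_ne_top
  have claim : ∀ n : ℕ, ∀ ρ : ℝ, 0 < ρ → 2^n * ρ ≤ ε →
      c ^ n * μ (ball x ρ) ≤ μ (ball x (2^n * ρ)) := by
    intro n
    induction n with
    | zero => intro ρ hρ _; simp
    | succ n ih =>
      intro ρ hρ hn
      have h2 : (2:ℝ)^(n+1) * ρ = 2^n * (2 * ρ) := by ring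
      have hρε : ρ < ε := by
        have h1 : (2:ℝ) * ρ ≤ 2^(n+1) * ρ := by
          have : (2:ℝ) ≤ 2^(n+1) := by
            calc (2:ℝ) = 2^1 := (pow_one 2).symm
            _ ≤ 2^(n+1) := pow_le_pow_right₀ (by norm_num) (by omega)
          nlinarith
        linarith
      calc c^(n+1) * μ (ball x ρ) = c^n * (c * μ (ball x ρ)) := by ring
        _ ≤ c^n * μ (ball x (2*ρ)) := mul_le_mul_right (h ρ hρ hρε) _
        _ ≤ μ (ball x (2^n * (2*ρ))) := ih (2*ρ) (by linarith) (by linarith [h2 ▸ hn])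
        _ = μ (ball x (2^(n+1) * ρ)) := by rw [← h2]
  intro ρ hρ hρ2
  have hex : ∃ k : ℕ, ε < 2^(k+1) * ρ := by
    obtain ⟨k, hk⟩ := pow_unbounded_of_one_lt (ε/ρ) (by norm_num : (1:ℝ) < 2)
    refine ⟨k, ?_⟩
    have : ε < 2^k * ρ := by
      rw [div_lt_iff₀ hρ] at hk; linarith
    have h2 : (2:ℝ)^k * ρ ≤ 2^(k+1) * ρ := by
      have h3 : (2:ℝ)^k ≤ 2^(k+1) :=
        pow_le_pow_right₀ (by norm_num : (1:ℝ) ≤ 2) (Nat.le_succ k)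
      nlinarith [mul_le_mul_of_nonneg_right h3 hρ.le]
    linarith
  classical
  set n := Nat.find hex with hn
  have hQ : ε < 2^(n+1) * ρ := Nat.find_spec hex
  have hn2 : 2^n * ρ ≤ ε := by
    rcases Nat.eq_zero_or_pos n with h0 | hpos
    · rw [h0]; simpa using by linarith
    · have := Nat.find_min hex (Nat.sub_lt hpos one_pos)
      push_neg at this
      have heq : n - 1 + 1 = n := Nat.succ_pred_eq_of_pos hpos
      rwa [heq] at this
  have step1 : μ (ball x ρ) ≤ (c^n)⁻¹ * μ (ball x ε) := by
    have h1 : c^n * μ (ball x ρ) ≤ μ (ball x ε) :=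
      (claim n ρ hρ hn2).trans (measure_mono (ball_subset_ball (by nlinarith [pow_pos (show (0:ℝ)<2 by norm_num) n])))
    calc μ (ball x ρ) = (c^n)⁻¹ * (c^n * μ (ball x ρ)) := by
          rw [← mul_assoc, ENNReal.inv_mul_cancel (pow_ne_zero n hc0)
            (ENNReal.pow_ne_top hctop), one_mul]
      _ ≤ (c^n)⁻¹ * μ (ball x ε) := mul_le_mul_right h1 _
  refine step1.trans (mul_le_mul_left ?_ _)
  have hcn : c^n = ENNReal.ofReal (((2:ℝ)^(d+1))^n) := by
    rw [hc, ← ENNReal.ofReal_pow (by positivity)]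
  rw [hcn, ← ENNReal.ofReal_inv_of_pos (by positivity)]
  apply ENNReal.ofReal_le_ofReal
  have hkey : ((2:ℝ)^n)⁻¹ ≤ 2*ρ/ε := by
    rw [inv_eq_one_div, div_le_div_iff₀ (by positivity) hε]
    have hps : (2:ℝ)^(n+1) = 2^n * 2 := pow_succ 2 n
    nlinarith [pow_pos (show (0:ℝ)<2 by norm_num) n]
  calc (((2:ℝ)^(d+1))^n)⁻¹ = (((2:ℝ)^n)^(d+1))⁻¹ := by
        rw [← pow_mul, ← pow_mul, Nat.mul_comm]
    _ = (((2:ℝ)^n)⁻¹)^(d+1) := (inv_pow _ _).symm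
    _ ≤ (2*ρ/ε)^(d+1) := pow_le_pow_left₀ (by positivity) hkey (d+1)

theorem Enull {d : ℕ} (μ : Measure (EuclideanSpace ℝ (Fin d))) [IsLocallyFiniteMeasure μ]
    (j m : ℕ) :
    μ {x : EuclideanSpace ℝ (Fin d) | ‖x‖ ≤ j ∧ ∀ ρ : ℝ, 0 < ρ → ρ ≤ 1/((m:ℝ)+1) →
      μ (ball x ρ) ≤ (j:ℝ≥0∞) * ENNReal.ofReal (ρ^(d+1))} = 0 := by
  set E := {x : EuclideanSpace ℝ (Fin d) | ‖x‖ ≤ j ∧ ∀ ρ : ℝ, 0 < ρ → ρ ≤ 1/((m:ℝ)+1) →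
      μ (ball x ρ) ≤ (j:ℝ≥0∞) * ENNReal.ofReal (ρ^(d+1))} with hE
  set v : ℝ≥0∞ := volume (ball (0 : EuclideanSpace ℝ (Fin d)) 1) with hv
  have hv0 : v ≠ 0 := (measure_ball_pos _ _ one_pos).ne'
  have hvt : v ≠ ⊤ := measure_ball_lt_top.ne
  set V : ℝ≥0∞ := volume (closedBall (0 : EuclideanSpace ℝ (Fin d)) ((j:ℝ)+1)) with hV
  have hVt : V ≠ ⊤ := measure_closedBall_lt_top.ne
  set K : ℝ≥0∞ := (j:ℝ≥0∞) * ENNReal.ofReal ((2:ℝ)^(d+1)) * V with hK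
  have hKt : K ≠ ⊤ := by
    rw [hK]
    exact ENNReal.mul_ne_top (ENNReal.mul_ne_top (ENNReal.natCast_ne_top j)
      ENNReal.ofReal_ne_top) hVt
  -- main estimate for small ρ0
  have main : ∀ ρ0 : ℝ, 0 < ρ0 → ρ0 ≤ 1 → 2*ρ0 ≤ 1/((m:ℝ)+1) →
      v * μ E ≤ K * ENNReal.ofReal ρ0 := by
    intro ρ0 hρ0 hρ1 hρm
    have hf : ∀ x ∈ E, ∀ δ > 0, (Set.Ioo (0:ℝ) ρ0 ∩ Set.Ioo 0 δ).Nonempty := by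
      intro x _ δ hδ
      exact ⟨min ρ0 δ / 2, ⟨by positivity, by
        calc min ρ0 δ / 2 ≤ ρ0/2 := by
              have := min_le_left ρ0 δ; linarith
          _ < ρ0 := by linarith⟩, by positivity, by
        calc min ρ0 δ / 2 ≤ δ/2 := by
              have := min_le_right ρ0 δ; linarith
          _ < δ := by linarith⟩
    obtain ⟨t, r, tc, ts, hrt, hcov, hdisj⟩ :=
      Besicovitch.exists_disjoint_closedBall_covering_ae μ (fun _ => Set.Ioo (0:ℝ) ρ0) E hf
        (fun _ => 1) (fun _ _ => one_pos)
    set U := ⋃ x ∈ t, closedBall x (r x) with hU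
    have hμE : μ E ≤ ∑' x : t, μ (closedBall (x:EuclideanSpace ℝ (Fin d)) (r x)) := by
      calc μ E ≤ μ ((E \ U) ∪ U) := measure_mono (Set.subset_diff_union E U)
        _ ≤ μ (E \ U) + μ U := measure_union_le _ _
        _ = μ U := by rw [hcov, zero_add]
        _ ≤ ∑' x : t, μ (closedBall (x:EuclideanSpace ℝ (Fin d)) (r x)) :=
            measure_biUnion_le μ tc _
    -- per ball estimate, multiplied by v
    have hball : ∀ x ∈ t, v * μ (closedBall x (r x)) ≤
        (j:ℝ≥0∞) * ENNReal.ofReal ((2:ℝ)^(d+1)) * ENNReal.ofReal ρ0 *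
          volume (closedBall x (r x)) := by
      intro x hx
      obtain ⟨⟨hr0, hrρ⟩, -⟩ := hrt x hx
      have hxE := ts hx
      have h2r : 0 < 2 * r x := by linarith
      have hb1 : μ (closedBall x (r x)) ≤ μ (ball x (2 * r x)) :=
        measure_mono (closedBall_subset_ball (by linarith))
      have hb2 : μ (ball x (2 * r x)) ≤ (j:ℝ≥0∞) * ENNReal.ofReal ((2*r x)^(d+1)) :=
        hxE.2 (2 * r x) h2r (by linarith)
      have hb3 : ((2:ℝ)*r x)^(d+1) ≤ (2:ℝ)^(d+1) * (ρ0 * (r x)^d) := by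
        rw [mul_pow]
        have h1 : (r x)^(d+1) = r x * (r x)^d := by ring
        have h2 : r x * (r x)^d ≤ ρ0 * (r x)^d :=
          mul_le_mul_of_nonneg_right hrρ.le (by positivity)
        have h3 : (0:ℝ) < 2^(d+1) := by positivity
        nlinarith [pow_nonneg hr0.le d]
      have hvol : volume (closedBall x (r x)) = ENNReal.ofReal ((r x)^d) * v := by
        rw [hv, Measure.addHaar_closedBall volume x hr0.le, finrank_euclideanSpace_fin]
      calc v * μ (closedBall x (r x)) ≤ v * ((j:ℝ≥0∞) * ENNReal.ofReal ((2*r x)^(d+1))) :=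
            mul_le_mul_right (hb1.trans hb2) v
        _ ≤ v * ((j:ℝ≥0∞) * ENNReal.ofReal ((2:ℝ)^(d+1) * (ρ0 * (r x)^d))) :=
            mul_le_mul_right (mul_le_mul_right (ENNReal.ofReal_le_ofReal hb3) _) v
        _ = (j:ℝ≥0∞) * ENNReal.ofReal ((2:ℝ)^(d+1)) * ENNReal.ofReal ρ0 *
              (ENNReal.ofReal ((r x)^d) * v) := by
            rw [ENNReal.ofReal_mul (by positivity), ENNReal.ofReal_mul hρ0.le]
            ring
        _ = (j:ℝ≥0∞) * ENNReal.ofReal ((2:ℝ)^(d+1)) * ENNReal.ofReal ρ0 *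
              volume (closedBall x (r x)) := by rw [hvol]
    have hsumvol : ∑' x : t, volume (closedBall (x:EuclideanSpace ℝ (Fin d)) (r x)) ≤ V := by
      rw [← measure_biUnion tc hdisj (fun x _ => measurableSet_closedBall)]
      refine measure_mono ?_
      refine Set.iUnion₂_subset fun x hx => ?_
      have hxE := ts hx
      obtain ⟨⟨hr0, hrρ⟩, -⟩ := hrt x hx
      refine closedBall_subset_closedBall' ?_
      have : dist x 0 = ‖x‖ := by simp
      rw [this]
      have := hxE.1
      linarith
    calc v * μ E ≤ v * ∑' x : t, μ (closedBall (x:EuclideanSpace ℝ (Fin d)) (r x)) :=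
          mul_le_mul_right hμE v
      _ = ∑' x : t, v * μ (closedBall (x:EuclideanSpace ℝ (Fin d)) (r x)) :=
          ENNReal.tsum_mul_left.symm
      _ ≤ ∑' x : t, (j:ℝ≥0∞) * ENNReal.ofReal ((2:ℝ)^(d+1)) * ENNReal.ofReal ρ0 *
            volume (closedBall (x:EuclideanSpace ℝ (Fin d)) (r x)) :=
          ENNReal.tsum_le_tsum fun x => hball x x.2
      _ = (j:ℝ≥0∞) * ENNReal.ofReal ((2:ℝ)^(d+1)) * ENNReal.ofReal ρ0 *
            ∑' x : t, volume (closedBall (x:EuclideanSpace ℝ (Fin d)) (r x)) :=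
          ENNReal.tsum_mul_left
      _ ≤ (j:ℝ≥0∞) * ENNReal.ofReal ((2:ℝ)^(d+1)) * ENNReal.ofReal ρ0 * V :=
          mul_le_mul_right hsumvol _
      _ = K * ENNReal.ofReal ρ0 := by rw [hK]; ring
  -- let ρ0 → 0
  have hlim : Tendsto (fun ρ : ℝ => K * ENNReal.ofReal ρ) (𝓝[>] (0:ℝ)) (𝓝 0) := by
    have h1 : Tendsto (fun ρ : ℝ => ENNReal.ofReal ρ) (𝓝[>] (0:ℝ)) (𝓝 0) := by
      have h2 : Tendsto (fun ρ : ℝ => ENNReal.ofReal ρ) (𝓝 (0:ℝ)) (𝓝 (ENNReal.ofReal 0)) :=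
        ENNReal.continuous_ofReal.tendsto 0
      simpa using h2.mono_left nhdsWithin_le_nhds
    have h3 := ENNReal.Tendsto.const_mul h1 (Or.inr hKt)
    simpa using h3
  have hev : ∀ᶠ ρ in 𝓝[>] (0:ℝ), v * μ E ≤ K * ENNReal.ofReal ρ := by
    have hmem : Set.Ioo (0:ℝ) (min 1 ((1/((m:ℝ)+1))/2)) ∈ 𝓝[>] (0:ℝ) := by
      apply Ioo_mem_nhdsGT_of_mem
      constructor
      · exact le_refl 0
      · have hm : (0:ℝ) < 1/((m:ℝ)+1) := by positivity
        simp only [lt_min_iff]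
        constructor <;> [norm_num; linarith]
    filter_upwards [hmem] with ρ hρ
    exact main ρ hρ.1 (le_of_lt (lt_of_lt_of_le hρ.2 (min_le_left _ _)))
      (by have := lt_of_lt_of_le hρ.2 (min_le_right _ _); linarith)
  have hle : v * μ E ≤ 0 := ge_of_tendsto hlim hev
  have : v * μ E = 0 := le_antisymm hle zero_le
  exact (mul_eq_zero.mp this).resolve_left hv0

theorem ae_doubling {d : ℕ} (μ : Measure (EuclideanSpace ℝ (Fin d)))
    [IsLocallyFiniteMeasure μ] :
    ∀ᵐ x ∂μ, ∀ ε : ℝ, 0 < ε → ∃ r : ℝ, 0 < r ∧ r < ε ∧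
      μ (ball x (2*r)) ≤ ENNReal.ofReal ((2:ℝ)^(d+1)) * μ (ball x r) := by
  rw [ae_iff]
  refine measure_mono_null ?_
    (measure_iUnion_null fun j : ℕ => measure_iUnion_null fun m : ℕ => Enull μ j m)
  intro x hx
  simp only [Set.mem_setOf_eq, not_forall, not_exists] at hx
  obtain ⟨ε, hε, hbad⟩ := hx
  have hbad' : ∀ r : ℝ, 0 < r → r < ε →
      ENNReal.ofReal ((2:ℝ)^(d+1)) * μ (ball x r) ≤ μ (ball x (2*r)) := by
    intro r hr hrε
    have := hbad r
    push_neg at this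
    exact (this hr hrε).le
  have hiter := iterate_doubling μ hε hbad'
  obtain ⟨m, hm⟩ := exists_nat_one_div_lt (show (0:ℝ) < ε/2 by linarith)
  have hballfin : μ (ball x ε) ≠ ⊤ := measure_ball_lt_top.ne
  obtain ⟨j1, hj1⟩ := ENNReal.exists_nat_gt
    (ENNReal.mul_ne_top ENNReal.ofReal_ne_top hballfin :
      ENNReal.ofReal ((2/ε)^(d+1)) * μ (ball x ε) ≠ ⊤)
  obtain ⟨j2, hj2⟩ := exists_nat_gt ‖x‖
  refine Set.mem_iUnion.2 ⟨max j1 j2, Set.mem_iUnion.2 ⟨m, ?_, ?_⟩⟩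
  · calc ‖x‖ ≤ j2 := hj2.le
      _ ≤ ((max j1 j2 : ℕ) : ℝ) := by exact_mod_cast Nat.le_max_right j1 j2
  · intro ρ hρ0 hρm
    have hρ2 : ρ ≤ ε/2 := hρm.trans hm.le
    have h1 := hiter ρ hρ0 hρ2
    have heq : (2*ρ/ε)^(d+1) = ρ^(d+1) * (2/ε)^(d+1) := by
      rw [← mul_pow]
      congr 1
      field_simp
    calc μ (ball x ρ) ≤ ENNReal.ofReal ((2*ρ/ε)^(d+1)) * μ (ball x ε) := h1
      _ = ENNReal.ofReal (ρ^(d+1)) * (ENNReal.ofReal ((2/ε)^(d+1)) * μ (ball x ε)) := by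
          rw [heq, ENNReal.ofReal_mul (by positivity), mul_assoc]
      _ ≤ ENNReal.ofReal (ρ^(d+1)) * (j1:ℝ≥0∞) := mul_le_mul_right hj1.le _
      _ ≤ ((max j1 j2 : ℕ):ℝ≥0∞) * ENNReal.ofReal (ρ^(d+1)) := by
          rw [mul_comm]
          exact mul_le_mul_left (by exact_mod_cast Nat.le_max_left j1 j2) _
open MeasureTheory Metric Filter Set
open scoped ENNReal Topology





theorem g_eq_A {d : ℕ} (μ : Measure (EuclideanSpace ℝ (Fin d))) [IsLocallyFiniteMeasure μ]
    (g : EuclideanSpace ℝ (Fin d) → ℝ) (hg : LocallyIntegrable g μ)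
    {α C : ℝ} (hα : 0 < α) (hC : 0 ≤ C)
    (aB : EuclideanSpace ℝ (Fin d) → ℝ → ℝ)
    (h1 : ∀ x ∈ measSupport μ, ∀ r : ℝ, 0 < r →
      ∫ y in ball x r, |g y - aB x r| ∂μ ≤ C * r ^ α * (μ (ball x (2 * r))).toReal)
    (h2 : ∀ x ∈ measSupport μ, ∀ r : ℝ, 0 < r → ∀ y ∈ measSupport μ, ∀ R : ℝ,
      ball x r ⊆ ball y R → R ≤ 2 * r → |aB x r - aB y R| ≤ C * r ^ α) :
    ∀ᵐ x ∂μ, g x = limUnder atTop (fun n : ℕ => aB x ((1/2)^n)) := by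
  have hBesic := (Besicovitch.vitaliFamily μ).ae_tendsto_average_norm_sub hg
  filter_upwards [ae_mem_measSupport μ, hBesic, ae_doubling μ] with x hx havg hdbl
  set A := limUnder atTop (fun n : ℕ => aB x ((1/2)^n)) with hA
  set Kd : ℝ := (2:ℝ)^(d+1) with hKd
  have hKd0 : 0 < Kd := by positivity
  set c2 : ℝ := (1 - (1/2:ℝ)^α)⁻¹ with hc2
  have hq1 : (1/2:ℝ)^α < 1 := Real.rpow_lt_one (by norm_num) (by norm_num) hα
  have hc2pos : 0 < c2 := inv_pos.2 (by linarith)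
  have havg' : Tendsto (fun r : ℝ => ⨍ y in closedBall x r, ‖g y - g x‖ ∂μ)
      (𝓝[>] (0:ℝ)) (𝓝 0) := havg.comp (Besicovitch.tendsto_filterAt μ x)
  -- the key estimate at good radii
  have key : ∀ r : ℝ, 0 < r →
      μ (ball x (2*r)) ≤ ENNReal.ofReal ((2:ℝ)^(d+1)) * μ (ball x r) →
      |g x - A| ≤ Kd * ((⨍ y in closedBall x r, ‖g y - g x‖ ∂μ) + C * r ^ α)
        + C * c2 * r ^ α := by
    intro r hr hdb
    set P : ℝ := (μ (ball x r)).toReal with hP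
    set Q : ℝ := (μ (closedBall x r)).toReal with hQ
    have hfinB : μ (ball x r) ≠ ⊤ := measure_ball_lt_top.ne
    have hfinB2 : μ (ball x (2*r)) ≠ ⊤ := measure_ball_lt_top.ne
    have hfinC : μ (closedBall x r) ≠ ⊤ := measure_closedBall_lt_top.ne
    have hPpos : 0 < P := ENNReal.toReal_pos (hx r hr).ne' hfinB
    have hdb' : (μ (ball x (2*r))).toReal ≤ Kd * P := by
      have := ENNReal.toReal_mono
        (ENNReal.mul_ne_top ENNReal.ofReal_ne_top hfinB) hdb
      rwa [ENNReal.toReal_mul, ENNReal.toReal_ofReal (by positivity)] at this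
    have hQP : Q ≤ Kd * P := by
      refine le_trans ?_ hdb'
      exact ENNReal.toReal_mono hfinB2
        (measure_mono (closedBall_subset_ball (by linarith)))
    -- integrability facts
    have I1 : IntegrableOn (fun y => |g y - g x|) (closedBall x r) μ := by
      have hconst : IntegrableOn (fun _ => g x) (closedBall x r) μ :=
        integrableOn_const measure_closedBall_lt_top.ne
      exact ((hg.integrableOn_isCompact (isCompact_closedBall x r)).sub hconst).abs
    have I2 : IntegrableOn (fun y => |g y - g x|) (ball x r) μ :=
      I1.mono_set ball_subset_closedBall
    have I3 : IntegrableOn (fun y => |g y - aB x r|) (ball x r) μ := by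
      have hconst : IntegrableOn (fun _ => aB x r) (ball x r) μ :=
        integrableOn_const measure_ball_lt_top.ne
      exact (((hg.integrableOn_isCompact (isCompact_closedBall x r)).mono_set
        ball_subset_closedBall).sub hconst).abs
    -- the averaged estimate
    have hQpos : 0 < Q := ENNReal.toReal_pos
      ((hx r hr).trans_le (measure_mono ball_subset_closedBall)).ne' hfinC
    have havg_eq : ∫ y in closedBall x r, |g y - g x| ∂μ =
        (⨍ y in closedBall x r, ‖g y - g x‖ ∂μ) * Q := by
      rw [setAverage_eq]
      simp only [Real.norm_eq_abs, smul_eq_mul]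
      rw [measureReal_def, ← hQ]
      field_simp
    have havgnn : 0 ≤ ⨍ y in closedBall x r, ‖g y - g x‖ ∂μ := by
      rw [setAverage_eq]
      simp only [smul_eq_mul]
      exact mul_nonneg (by positivity) (integral_nonneg fun y => norm_nonneg _)
    have step1 : |g x - aB x r| * P ≤
        (⨍ y in closedBall x r, ‖g y - g x‖ ∂μ) * Q + C * r ^ α * (μ (ball x (2*r))).toReal := by
      have hconst : ∫ y in ball x r, |g x - aB x r| ∂μ = |g x - aB x r| * P := by
        rw [setIntegral_const, smul_eq_mul, mul_comm, hP, measureReal_def]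
      have hmono : ∫ y in ball x r, |g x - aB x r| ∂μ ≤
          ∫ y in ball x r, (|g y - g x| + |g y - aB x r|) ∂μ := by
        refine setIntegral_mono_on (integrableOn_const measure_ball_lt_top.ne)
          (I2.add I3) measurableSet_ball ?_
        intro y _
        calc |g x - aB x r| ≤ |g x - g y| + |g y - aB x r| := abs_sub_le _ _ _
          _ = |g y - g x| + |g y - aB x r| := by rw [abs_sub_comm]
      have hadd : ∫ y in ball x r, (|g y - g x| + |g y - aB x r|) ∂μ =
          (∫ y in ball x r, |g y - g x| ∂μ) + ∫ y in ball x r, |g y - aB x r| ∂μ :=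
        integral_add I2 I3
      have hsubset : ∫ y in ball x r, |g y - g x| ∂μ ≤
          ∫ y in closedBall x r, |g y - g x| ∂μ := by
        refine setIntegral_mono_set I1 ?_ (HasSubset.Subset.eventuallyLE ball_subset_closedBall)
        exact Eventually.of_forall fun y => abs_nonneg _
      have hh1 := h1 x hx r hr
      rw [← hconst]
      calc ∫ y in ball x r, |g x - aB x r| ∂μ
          ≤ (∫ y in ball x r, |g y - g x| ∂μ) + ∫ y in ball x r, |g y - aB x r| ∂μ := by
            rw [← hadd]; exact hmono
        _ ≤ (∫ y in closedBall x r, |g y - g x| ∂μ) + C * r ^ α * (μ (ball x (2*r))).toReal :=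
            add_le_add hsubset hh1
        _ = (⨍ y in closedBall x r, ‖g y - g x‖ ∂μ) * Q + C * r ^ α * (μ (ball x (2*r))).toReal := by
            rw [havg_eq]
    have hrα : 0 ≤ r ^ α := Real.rpow_nonneg hr.le α
    have step2 : |g x - aB x r| * P ≤ Kd * ((⨍ y in closedBall x r, ‖g y - g x‖ ∂μ)
        + C * r ^ α) * P := by
      calc |g x - aB x r| * P
          ≤ (⨍ y in closedBall x r, ‖g y - g x‖ ∂μ) * Q
            + C * r ^ α * (μ (ball x (2*r))).toReal := step1
        _ ≤ (⨍ y in closedBall x r, ‖g y - g x‖ ∂μ) * (Kd * P)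
            + C * r ^ α * (Kd * P) := by
            refine add_le_add (mul_le_mul_of_nonneg_left hQP havgnn)
              (mul_le_mul_of_nonneg_left hdb' (by positivity))
        _ = Kd * ((⨍ y in closedBall x r, ‖g y - g x‖ ∂μ) + C * r ^ α) * P := by ring
    have hmain : |g x - aB x r| ≤ Kd * ((⨍ y in closedBall x r, ‖g y - g x‖ ∂μ) + C * r ^ α) :=
      le_of_mul_le_mul_right (by linarith [step2]) hPpos
    have htail : |aB x r - A| ≤ C * c2 * r ^ α := by
      rw [abs_sub_comm]
      exact A_sub_aB hα hC h2 hx hr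
    calc |g x - A| ≤ |g x - aB x r| + |aB x r - A| := abs_sub_le _ _ _
      _ ≤ Kd * ((⨍ y in closedBall x r, ‖g y - g x‖ ∂μ) + C * r ^ α) + C * c2 * r ^ α :=
          add_le_add hmain htail
  -- now let r → 0 along good radii
  have hrpow : Tendsto (fun r : ℝ => r ^ α) (𝓝[>] (0:ℝ)) (𝓝 0) := by
    have hcont : ContinuousAt (fun r : ℝ => r ^ α) 0 :=
      Real.continuousAt_rpow_const 0 α (Or.inr hα.le)
    have := hcont.tendsto.mono_left (nhdsWithin_le_nhds (s := Set.Ioi (0:ℝ)))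
    rwa [Real.zero_rpow hα.ne'] at this
  have hF : Tendsto (fun r : ℝ => Kd * ((⨍ y in closedBall x r, ‖g y - g x‖ ∂μ) + C * r ^ α)
      + C * c2 * r ^ α) (𝓝[>] (0:ℝ)) (𝓝 0) := by
    have h0 : Tendsto (fun r : ℝ => Kd * ((⨍ y in closedBall x r, ‖g y - g x‖ ∂μ) + C * r ^ α)
        + C * c2 * r ^ α) (𝓝[>] (0:ℝ)) (𝓝 (Kd * (0 + C * 0) + C * c2 * 0)) := by
      exact (((havg'.add (hrpow.const_mul C)).const_mul Kd).add (hrpow.const_mul (C * c2)))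
    simpa using h0
  -- conclude
  have hfreq : ∃ᶠ r in 𝓝[>] (0:ℝ),
      μ (ball x (2*r)) ≤ ENNReal.ofReal ((2:ℝ)^(d+1)) * μ (ball x r) := by
    rw [frequently_iff]
    intro U hU
    obtain ⟨u, hu, hsub⟩ := mem_nhdsGT_iff_exists_Ioo_subset.1 hU
    obtain ⟨r, hr0, hrε, hrd⟩ := hdbl u hu
    exact ⟨r, hsub ⟨hr0, hrε⟩, hrd⟩
  have habs : |g x - A| ≤ 0 := by
    refine le_of_forall_gt fun e he => ?_
    have hev : ∀ᶠ r in 𝓝[>] (0:ℝ), (Kd * ((⨍ y in closedBall x r, ‖g y - g x‖ ∂μ) + C * r ^ α)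
        + C * c2 * r ^ α) < e := hF.eventually (gt_mem_nhds he)
    have hpos : ∀ᶠ r in 𝓝[>] (0:ℝ), r ∈ Set.Ioi (0:ℝ) := eventually_mem_nhdsWithin
    obtain ⟨r, hrd, hre, hr0⟩ := (hfreq.and_eventually (hev.and hpos)).exists
    exact lt_of_le_of_lt (key r hr0 hrd) hre
  have h0 : |g x - A| = 0 := le_antisymm habs (abs_nonneg _)
  exact sub_eq_zero.1 (abs_eq_zero.1 h0)

/-- Condition (I) of the characterization theorem, with constant `C`, implies that `g` is
Lipschitz of order `α` with constant `C' C`. -/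
theorem stmt14 {d : ℕ} (μ : Measure (EuclideanSpace ℝ (Fin d))) [IsLocallyFiniteMeasure μ]
    (hμ : μ ≠ 0)
    (g : EuclideanSpace ℝ (Fin d) → ℝ) (hg : LocallyIntegrable g μ)
    (α : ℝ) (hα : 0 < α) (hα1 : α ≤ 1) (C : ℝ) (hC : 0 ≤ C)
    (aB : EuclideanSpace ℝ (Fin d) → ℝ → ℝ)
    (h1 : ∀ x ∈ measSupport μ, ∀ r : ℝ, 0 < r →
      ∫ y in ball x r, |g y - aB x r| ∂μ ≤ C * r ^ α * (μ (ball x (2 * r))).toReal)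
    (h2 : ∀ x ∈ measSupport μ, ∀ r : ℝ, 0 < r → ∀ y ∈ measSupport μ, ∀ R : ℝ,
      ball x r ⊆ ball y R → R ≤ 2 * r → |aB x r - aB y R| ≤ C * r ^ α) :
    ∃ C' : ℝ, 0 < C' ∧
      ∀ᵐ x ∂μ, ∀ᵐ y ∂μ, |g x - g y| ≤ C' * C * dist x y ^ α := by
  have hq1 : (1/2:ℝ)^α < 1 := Real.rpow_lt_one (by norm_num) (by norm_num) hα
  have hc2pos : (0:ℝ) < (1 - (1/2:ℝ)^α)⁻¹ := inv_pos.2 (by linarith)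
  refine ⟨3 * (1 - (1/2:ℝ)^α)⁻¹ + 1, by linarith, ?_⟩
  have hgA := g_eq_A μ g hg hα hC aB h1 h2
  filter_upwards [hgA, ae_mem_measSupport μ] with x hgx hxs
  filter_upwards [hgA, ae_mem_measSupport μ] with y hgy hys
  rw [hgx, hgy]
  have hh := A_holder hα hC h2 hxs hys hα1
  calc |limUnder atTop (fun n : ℕ => aB x ((1/2)^n)) -
        limUnder atTop (fun n : ℕ => aB y ((1/2)^n))|
      ≤ C * (3 * (1 - (1/2:ℝ)^α)⁻¹ + 1) * dist x y ^ α := hh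
    _ = (3 * (1 - (1/2:ℝ)^α)⁻¹ + 1) * C * dist x y ^ α := by ring
end
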